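/- Let H be a Hilbert space and X a closed subspace of B(H) containing the identity I. Suppose that for every x ∈ X with ‖x‖ ≤ 1 and every t > 0, inf{ ‖[[t·I, x],[y, t·I]]‖ : y ∈ X, ‖y‖ ≤ 1 } ≤ √(t² + 1). Then X is selfadjoint, i.e. X* = X. -/

import Mathlib

/-!
Testing `T = [[t, x], [y, t]]` on `(ξ, η)` gives
`t² ‖(ξ, η)‖² + 2t Re ⟪ξ, (x + y*) η⟫ ≤ ‖T‖² ‖(ξ, η)‖²`; taking `ξ` parallel to `(x + y*) η` with
`‖ξ‖ = ‖η‖` shows that `‖T‖² ≤ t² + c` forces `t ‖x + y*‖ ≤ c`. The hypothesis yields, for every `t`,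
some `y ∈ X` with `‖T‖² < t² + 2`, so these `y` converge to `-x*` as `t → ∞`, and `-x* ∈ X` because
`X` is closed. Scaling removes the restriction `‖x‖ ≤ 1`.
-/

open ContinuousLinearMap in
/-- The block operator `[[a, b], [c, d]]` on the Hilbert space `H ⊕₂ H`,
realizing the canonical C*-norm on `M₂(B(H))`. -/
noncomputable def blockOp {H : Type*} [NormedAddCommGroup H] [InnerProductSpace ℂ H]
    (a b c d : H →L[ℂ] H) : WithLp 2 (H × H) →L[ℂ] WithLp 2 (H × H) :=
  (((WithLp.prodContinuousLinearEquiv 2 ℂ H H).symm : H × H →L[ℂ] WithLp 2 (H × H)).comp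
    ((a.comp (fst ℂ H H) + b.comp (snd ℂ H H)).prod
      (c.comp (fst ℂ H H) + d.comp (snd ℂ H H)))).comp
    ((WithLp.prodContinuousLinearEquiv 2 ℂ H H) : WithLp 2 (H × H) →L[ℂ] H × H)

theorem neg_star_mem_closure_of_forall_exists_norm_add_star_lt {E : Type*}
    [NormedAddCommGroup E] [StarAddMonoid E] [NormedStarGroup E] {S : Set E} {x : E}
    (h : ∀ ε > 0, ∃ y ∈ S, ‖x + star y‖ < ε) : -star x ∈ closure S := by
  refine Metric.mem_closure_iff.mpr fun ε hε => ?_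
  obtain ⟨y, hyS, hy⟩ := h ε hε
  refine ⟨y, hyS, ?_⟩
  rwa [dist_eq_norm, ← neg_add', norm_neg, ← norm_star, star_add, star_star]

theorem Submodule.star_mem_of_forall_norm_le_one {𝕜 E : Type*} [RCLike 𝕜] [NormedAddCommGroup E]
    [NormedSpace 𝕜 E] [StarAddMonoid E] [StarModule 𝕜 E] (X : Submodule 𝕜 E)
    (hX : ∀ x ∈ X, ‖x‖ ≤ 1 → star x ∈ X) {x : E} (hx : x ∈ X) : star x ∈ X := by
  rcases eq_or_ne x 0 with rfl | hx0
  · simp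
  have hc : (‖x‖ : 𝕜)⁻¹ ≠ 0 := by simpa using hx0
  have hstar := hX _ (X.smul_mem _ hx) (norm_smul_inv_norm hx0).le
  rwa [star_smul, star_inv₀, RCLike.star_def, RCLike.conj_ofReal, X.smul_mem_iff hc] at hstar

section BlockOp

open ContinuousLinearMap

variable {H : Type*} [NormedAddCommGroup H] [InnerProductSpace ℂ H]

theorem norm_blockOp_apply_sq (a b c d : H →L[ℂ] H) (ξ η : H) :
    ‖blockOp a b c d (WithLp.toLp 2 (ξ, η))‖ ^ 2 = ‖a ξ + b η‖ ^ 2 + ‖c ξ + d η‖ ^ 2 :=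
  WithLp.prod_norm_sq_eq_of_L2 _

variable [CompleteSpace H]

theorem sq_mul_add_re_inner_le_norm_blockOp_sq (x y : H →L[ℂ] H) {t : ℝ} (ht : 0 ≤ t) (ξ η : H) :
    t ^ 2 * (‖ξ‖ ^ 2 + ‖η‖ ^ 2) + 2 * t * RCLike.re (inner ℂ ξ ((x + star y) η))
      ≤ ‖blockOp ((t : ℂ) • 1) x y ((t : ℂ) • 1)‖ ^ 2 * (‖ξ‖ ^ 2 + ‖η‖ ^ 2) := by
  set T := blockOp ((t : ℂ) • 1) x y ((t : ℂ) • 1)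
  have hw : ‖WithLp.toLp 2 (ξ, η)‖ ^ 2 = ‖ξ‖ ^ 2 + ‖η‖ ^ 2 := WithLp.prod_norm_sq_eq_of_L2 _
  have hTw : ‖T (WithLp.toLp 2 (ξ, η))‖ ^ 2 ≤ ‖T‖ ^ 2 * (‖ξ‖ ^ 2 + ‖η‖ ^ 2) := by
    rw [← hw, ← mul_pow]
    exact pow_le_pow_left₀ (norm_nonneg _) (T.le_opNorm _) 2
  have hinner : inner ℂ ξ ((x + star y) η) = inner ℂ ξ (x η) + inner ℂ (y ξ) η := by
    rw [add_apply, inner_add_right, star_eq_adjoint, adjoint_inner_right]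
  rw [norm_blockOp_apply_sq, @norm_add_sq ℂ, @norm_add_sq ℂ] at hTw
  rw [hinner]
  simp only [smul_apply, one_apply_eq_self, inner_smul_left, inner_smul_right, Complex.conj_ofReal,
    RCLike.re_to_complex, Complex.add_re, Complex.re_ofReal_mul, norm_smul, Complex.norm_real,
    Real.norm_eq_abs, abs_of_nonneg ht] at hTw ⊢
  nlinarith [sq_nonneg ‖x η‖, sq_nonneg ‖y ξ‖]

theorem mul_norm_add_star_le_of_norm_blockOp_sq_le (x y : H →L[ℂ] H) {t c : ℝ} (ht : 0 < t)
    (hc : 0 ≤ c) (hT : ‖blockOp ((t : ℂ) • 1) x y ((t : ℂ) • 1)‖ ^ 2 ≤ t ^ 2 + c) :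
    t * ‖x + star y‖ ≤ c := by
  rw [← le_div_iff₀' ht]
  refine opNorm_le_bound _ (by positivity) fun η => ?_
  set v := (x + star y) η
  rcases eq_or_ne v 0 with hv | hv
  · rw [hv, norm_zero]; positivity
  have hη : 0 < ‖η‖ := norm_pos_iff.mpr fun hη => hv (by simp [v, hη])
  set ξ := ((‖η‖ / ‖v‖ : ℝ) : ℂ) • v
  have hξ : ‖ξ‖ = ‖η‖ := by simp [ξ, norm_smul, hv]
  have hre : RCLike.re (inner ℂ ξ v) = ‖η‖ * ‖v‖ := by
    rw [inner_smul_left, Complex.conj_ofReal, RCLike.re_to_complex, Complex.re_ofReal_mul,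
      ← RCLike.re_to_complex, inner_self_eq_norm_sq]
    field_simp
  have key := sq_mul_add_re_inner_le_norm_blockOp_sq x y ht.le ξ η
  rw [hξ, hre] at key
  have hT' := mul_le_mul_of_nonneg_right hT (by positivity : 0 ≤ ‖η‖ ^ 2 + ‖η‖ ^ 2)
  rw [div_mul_eq_mul_div, le_div_iff₀ ht]
  nlinarith

theorem exists_norm_add_star_lt_of_sInf_le (X : Submodule ℂ (H →L[ℂ] H)) (x : H →L[ℂ] H)
    (h : ∀ t : ℝ, 0 < t →
      sInf {r : ℝ | ∃ y ∈ X, ‖y‖ ≤ 1 ∧ r = ‖blockOp ((t : ℂ) • 1) x y ((t : ℂ) • 1)‖}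
        ≤ Real.sqrt (t ^ 2 + 1)) :
    ∀ ε > 0, ∃ y ∈ X, ‖x + star y‖ < ε := by
  intro ε hε
  have ht : 0 < 3 / ε := by positivity
  have hlt := (h _ ht).trans_lt
    (Real.sqrt_lt_sqrt (by positivity) (by linarith) : _ < Real.sqrt ((3 / ε) ^ 2 + 2))
  obtain ⟨_, ⟨y, hyX, -, rfl⟩, hy⟩ :=
    exists_lt_of_csInf_lt (by exact ⟨_, 0, X.zero_mem, norm_zero.trans_le zero_le_one, rfl⟩) hlt
  have hy2 := mul_norm_add_star_le_of_norm_blockOp_sq_le x y ht zero_le_two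
    ((Real.lt_sqrt (norm_nonneg _)).mp hy).le
  refine ⟨y, hyX, ?_⟩
  rw [div_mul_eq_mul_div, div_le_iff₀ hε] at hy2
  linarith

end BlockOp

theorem stmt14_general {H : Type*} [NormedAddCommGroup H] [InnerProductSpace ℂ H] [CompleteSpace H]
    (X : Submodule ℂ (H →L[ℂ] H)) (hX : IsClosed (X : Set (H →L[ℂ] H)))
    (h : ∀ x ∈ X, ‖x‖ ≤ 1 → ∀ t : ℝ, 0 < t →
      sInf {r : ℝ | ∃ y ∈ X, ‖y‖ ≤ 1 ∧ r = ‖blockOp ((t : ℂ) • 1) x y ((t : ℂ) • 1)‖}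
        ≤ Real.sqrt (t ^ 2 + 1)) :
    ∀ x ∈ X, star x ∈ X := by
  refine fun x hx => X.star_mem_of_forall_norm_le_one (fun z hz hz1 => ?_) hx
  have hmem := neg_star_mem_closure_of_forall_exists_norm_add_star_lt
    (exists_norm_add_star_lt_of_sInf_le X z (h z hz hz1))
  rw [hX.closure_eq] at hmem
  simpa using X.neg_mem hmem

/-- If `X` is a closed unital subspace of `B(H)` such that for each contraction `x ∈ X`
and `t > 0`, `inf { ‖[[t·I, x], [y, t·I]]‖ : y ∈ X, ‖y‖ ≤ 1 } ≤ √(t² + 1)`, then `X` is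
selfadjoint. -/
theorem stmt14 {H : Type*} [NormedAddCommGroup H] [InnerProductSpace ℂ H] [CompleteSpace H]
    (X : Submodule ℂ (H →L[ℂ] H)) (hX : IsClosed (X : Set (H →L[ℂ] H)))
    (h1 : (1 : H →L[ℂ] H) ∈ X)
    (h : ∀ x ∈ X, ‖x‖ ≤ 1 → ∀ t : ℝ, 0 < t →
      sInf {r : ℝ | ∃ y ∈ X, ‖y‖ ≤ 1 ∧ r = ‖blockOp ((t : ℂ) • 1) x y ((t : ℂ) • 1)‖}
        ≤ Real.sqrt (t ^ 2 + 1)) :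
    ∀ x ∈ X, star x ∈ X :=
  stmt14_general X hX h
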